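/- arXiv:2204.10861 — 3 statements merged into one kernel-verified Lean document; each statement's English description precedes it below -/
import Mathlib

section
/- Let N be a G-graded near-ring and P a graded ideal of N with P² ≠ {0}. Then P is a graded prime ideal of N if and only if P is a graded weakly prime ideal of N. -/
open Pointwise

/-- A (right) near-ring: an additive group (not necessarily abelian) with an
associative multiplication that is right distributive over addition. -/
class NearRing (N : Type*) extends AddGroup N, Semigroup N where
  right_distrib : ∀ a b c : N, (a + b) * c = a * c + b * c

/-- A (two-sided) ideal of a near-ring. -/
structure NearRingIdeal (N : Type*) [NearRing N] where
  carrier : AddSubgroup N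
  normal : carrier.Normal
  mul_mem_right : ∀ i n : N, i ∈ carrier → i * n ∈ carrier
  quasi_left : ∀ m n i : N, i ∈ carrier → m * (n + i) - m * n ∈ carrier

instance (N : Type*) [NearRing N] : SetLike (NearRingIdeal N) N where
  coe I := I.carrier
  coe_injective := by
    rintro ⟨a, _, _, _⟩ ⟨b, _, _, _⟩ h
    congr
    exact SetLike.coe_injective h

/-- A `G`-grading on a near-ring `N`: a family of additive normal subgroups
whose internal direct sum is `N`, compatible with multiplication. -/
structure NearRingGrading (G : Type*) [Monoid G] (N : Type*) [NearRing N] where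
  component : G → AddSubgroup N
  normal : ∀ σ : G, (component σ).Normal
  mul_mem : ∀ σ τ : G, ∀ x ∈ component σ, ∀ y ∈ component τ, x * y ∈ component (σ * τ)
  span_top : (⨆ σ : G, component σ) = ⊤
  independent : ∀ σ : G, component σ ⊓ (⨆ τ ∈ ({σ}ᶜ : Set G), component τ) = ⊥

variable {G : Type*} [Monoid G] {N : Type*} [NearRing N]

/-- An ideal is graded if it is generated by its homogeneous elements. -/
def NearRingGrading.IsGradedIdeal (gr : NearRingGrading G N) (I : NearRingIdeal N) : Prop :=
  I.carrier = AddSubgroup.closure ((I : Set N) ∩ ⋃ σ : G, (gr.component σ : Set N))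

/-- The product `IJ` of two ideals, as the set of products of their elements. -/
def idealProd (I J : NearRingIdeal N) : Set N := (I : Set N) * (J : Set N)

/-- A graded prime ideal of a graded near-ring. -/
def NearRingGrading.IsGradedPrime (gr : NearRingGrading G N) (P : NearRingIdeal N) : Prop :=
  gr.IsGradedIdeal P ∧ ∀ I J : NearRingIdeal N, gr.IsGradedIdeal I → gr.IsGradedIdeal J →
    idealProd I J ⊆ (P : Set N) → (I : Set N) ⊆ (P : Set N) ∨ (J : Set N) ⊆ (P : Set N)

/-- A graded weakly prime ideal of a graded near-ring. -/
def NearRingGrading.IsGradedWeaklyPrime (gr : NearRingGrading G N) (P : NearRingIdeal N) : Prop :=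
  gr.IsGradedIdeal P ∧ ∀ I J : NearRingIdeal N, gr.IsGradedIdeal I → gr.IsGradedIdeal J →
    idealProd I J ≠ {0} → idealProd I J ⊆ (P : Set N) →
      (I : Set N) ⊆ (P : Set N) ∨ (J : Set N) ⊆ (P : Set N)

/-- A graded almost prime ideal of a graded near-ring. -/
def NearRingGrading.IsGradedAlmostPrime (gr : NearRingGrading G N) (P : NearRingIdeal N) : Prop :=
  gr.IsGradedIdeal P ∧ ∀ I J : NearRingIdeal N, gr.IsGradedIdeal I → gr.IsGradedIdeal J →
    idealProd I J ⊆ (P : Set N) → ¬ idealProd I J ⊆ idealProd P P →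
      (I : Set N) ⊆ (P : Set N) ∨ (J : Set N) ⊆ (P : Set N)

/-!
If `IJ ⊆ P` but `IJ = {0}`, weak primeness gives nothing for `I, J` themselves, so enlarge them to
`P + I` and `J + P`. For `p, q ∈ P`, `a ∈ I`, `b ∈ J` we have
`(p + a)(b + q) = p(b + q) + (a(b + q) - ab) + ab`, whose terms lie in `P` (right ideal, the
near-ring ideal axiom `m(n + i) - mn ∈ P`, and `IJ ⊆ P`). So the enlarged product lies in `P`, and
it contains `P² ≠ {0}`, hence weak primeness applies to it and yields `I ⊆ P` or `J ⊆ P`.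
-/

theorem NearRing.zero_mul (a : N) : (0 : N) * a = 0 := by
  have h := NearRing.right_distrib (0 : N) 0 a
  rwa [add_zero, left_eq_add] at h

namespace NearRingIdeal

instance : PartialOrder (NearRingIdeal N) := .ofSetLike (NearRingIdeal N) N

instance : AddSubgroupClass (NearRingIdeal N) N where
  add_mem {I} := I.carrier.add_mem
  zero_mem I := I.carrier.zero_mem
  neg_mem {I} := I.carrier.neg_mem

instance : Max (NearRingIdeal N) where
  max A B :=
    { carrier := A.carrier ⊔ B.carrier
      normal := by
        have := A.normal
        have := B.normal
        exact AddSubgroup.sup_normal A.carrier B.carrier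
      mul_mem_right := by
        intro i n hi
        have := B.normal
        obtain ⟨p, hp, q, hq, rfl⟩ := AddSubgroup.mem_sup_of_normal_right.mp hi
        rw [NearRing.right_distrib]
        exact add_mem (AddSubgroup.mem_sup_left (A.mul_mem_right p n hp))
          (AddSubgroup.mem_sup_right (B.mul_mem_right q n hq))
      quasi_left := by
        intro m n i hi
        have := B.normal
        obtain ⟨p, hp, q, hq, rfl⟩ := AddSubgroup.mem_sup_of_normal_right.mp hi
        rw [← sub_add_sub_cancel _ (m * (n + p)), ← add_assoc]
        exact add_mem (AddSubgroup.mem_sup_right (B.quasi_left m (n + p) q hq))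
          (AddSubgroup.mem_sup_left (A.quasi_left m n p hp)) }

theorem mem_sup {A B : NearRingIdeal N} {x : N} :
    x ∈ A ⊔ B ↔ ∃ p ∈ A, ∃ q ∈ B, p + q = x :=
  have := B.normal
  AddSubgroup.mem_sup_of_normal_right

protected theorem le_sup_left (A B : NearRingIdeal N) : A ≤ A ⊔ B :=
  fun _ hx => AddSubgroup.mem_sup_left (S := A.carrier) hx

protected theorem le_sup_right (A B : NearRingIdeal N) : B ≤ A ⊔ B :=
  fun _ hx => AddSubgroup.mem_sup_right (T := B.carrier) hx

end NearRingIdeal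

theorem NearRingGrading.IsGradedIdeal.sup {gr : NearRingGrading G N} {A B : NearRingIdeal N}
    (hA : gr.IsGradedIdeal A) (hB : gr.IsGradedIdeal B) : gr.IsGradedIdeal (A ⊔ B) := by
  refine le_antisymm (sup_le ?_ ?_) ((AddSubgroup.closure_le _).mpr Set.inter_subset_left)
  · rw [hA]
    exact AddSubgroup.closure_mono
      (Set.inter_subset_inter_left _ (SetLike.coe_subset_coe.mpr (A.le_sup_left B)))
  · rw [hB]
    exact AddSubgroup.closure_mono
      (Set.inter_subset_inter_left _ (SetLike.coe_subset_coe.mpr (A.le_sup_right B)))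

theorem idealProd_mono {I I' J J' : NearRingIdeal N} (hI : I ≤ I') (hJ : J ≤ J') :
    idealProd I J ⊆ idealProd I' J' :=
  Set.mul_subset_mul (SetLike.coe_subset_coe.mpr hI) (SetLike.coe_subset_coe.mpr hJ)

theorem zero_mem_idealProd (I J : NearRingIdeal N) : (0 : N) ∈ idealProd I J :=
  NearRing.zero_mul (0 : N) ▸ Set.mul_mem_mul (zero_mem I) (zero_mem J)

theorem idealProd_eq_zero_of_le {I I' J J' : NearRingIdeal N} (hI : I ≤ I') (hJ : J ≤ J')
    (h : idealProd I' J' = {0}) : idealProd I J = {0} :=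
  (h ▸ idealProd_mono hI hJ).antisymm (Set.singleton_subset_iff.mpr (zero_mem_idealProd I J))

theorem idealProd_sup_subset {P I J : NearRingIdeal N} (h : idealProd I J ⊆ (P : Set N)) :
    idealProd (P ⊔ I) (J ⊔ P) ⊆ (P : Set N) := by
  rintro _ ⟨x, hx, y, hy, rfl⟩
  obtain ⟨p, hp, a, ha, rfl⟩ := NearRingIdeal.mem_sup.mp hx
  obtain ⟨b, hb, q, hq, rfl⟩ := NearRingIdeal.mem_sup.mp hy
  have hab : a * b ∈ P := h (Set.mul_mem_mul ha hb)
  have hquasi : a * (b + q) - a * b ∈ P := P.quasi_left a b q hq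
  show (p + a) * (b + q) ∈ P
  rw [NearRing.right_distrib, ← sub_add_cancel (a * (b + q)) (a * b)]
  exact add_mem (P.mul_mem_right p (b + q) hp) (add_mem hquasi hab)

theorem NearRingGrading.IsGradedPrime.isGradedWeaklyPrime {gr : NearRingGrading G N}
    {P : NearRingIdeal N} (h : gr.IsGradedPrime P) : gr.IsGradedWeaklyPrime P :=
  ⟨h.1, fun I J hI hJ _ hIJ => h.2 I J hI hJ hIJ⟩

theorem NearRingGrading.IsGradedWeaklyPrime.isGradedPrime {gr : NearRingGrading G N}
    {P : NearRingIdeal N} (h : gr.IsGradedWeaklyPrime P) (hsq : idealProd P P ≠ {0}) :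
    gr.IsGradedPrime P := by
  refine ⟨h.1, fun I J hI hJ hIJ => ?_⟩
  by_cases hzero : idealProd I J = {0}
  · have hne : idealProd (P ⊔ I) (J ⊔ P) ≠ {0} := fun h0 =>
      hsq (idealProd_eq_zero_of_le (P.le_sup_left I) (J.le_sup_right P) h0)
    refine (h.2 _ _ (h.1.sup hI) (hJ.sup h.1) hne (idealProd_sup_subset hIJ)).imp ?_ ?_
    · exact fun hK => (SetLike.coe_subset_coe.mpr (P.le_sup_right I)).trans hK
    · exact fun hL => (SetLike.coe_subset_coe.mpr (J.le_sup_left P)).trans hL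
  · exact h.2 I J hI hJ hzero hIJ

theorem prime_iff_weaklyPrime_of_sq_ne_zero_general (gr : NearRingGrading G N) (P : NearRingIdeal N)
    (hsq : idealProd P P ≠ {0}) :
    gr.IsGradedPrime P ↔ gr.IsGradedWeaklyPrime P :=
  ⟨fun h => h.isGradedWeaklyPrime, fun h => h.isGradedPrime hsq⟩

/-- For a graded ideal `P` with `P² ≠ {0}`, graded prime ↔ graded weakly prime. -/
theorem prime_iff_weaklyPrime_of_sq_ne_zero (gr : NearRingGrading G N) (P : NearRingIdeal N)
    (hP : gr.IsGradedIdeal P) (hsq : idealProd P P ≠ {0}) :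
    gr.IsGradedPrime P ↔ gr.IsGradedWeaklyPrime P :=
  prime_iff_weaklyPrime_of_sq_ne_zero_general gr P hsq
end

section
/- Let N be a G-graded near-ring, P and I graded ideals of N with I ⊆ P, and π : N → N/I the canonical epimorphism. If P is a graded weakly prime ideal of N, then π(P) is a graded weakly prime ideal of N/I. -/
open Pointwise

variable {G : Type*} [Monoid G] {N : Type*} [NearRing N]

/-- A homomorphism of near-rings. -/
structure NearRingHom (N M : Type*) [NearRing N] [NearRing M] where
  toFun : N → M
  map_add : ∀ x y : N, toFun (x + y) = toFun x + toFun y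
  map_mul : ∀ x y : N, toFun (x * y) = toFun x * toFun y


/-!
Ideals of `N/I` correspond to ideals of `N` containing `I = ker π`, and since the grading of
`N/I` is the image grading, the pull-back and push-forward along `π` preserve gradedness
(pulling back uses that `I` itself is graded). Given graded ideals `J', K'` of `N/I` with
`{0} ≠ J'K' ⊆ π(P)`, their preimages `J, K` satisfy `π(JK) = J'K'`, hence `JK ≠ {0}`, and
`JK ⊆ π⁻¹(π(P)) = P` because `I ⊆ P`. Weak primality of `P` then gives `J ⊆ P` or `K ⊆ P`,
and applying `π` yields `J' ⊆ π(P)` or `K' ⊆ π(P)`.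
-/

namespace NearRingHom

variable {M : Type*} [NearRing M] (π : NearRingHom N M)

def toAddMonoidHom : N →+ M := AddMonoidHom.mk' π.toFun π.map_add

def toMulHom : N →ₙ* M := ⟨π.toFun, π.map_mul⟩

@[simp]
lemma toAddMonoidHom_apply (x : N) : π.toAddMonoidHom x = π.toFun x := rfl

lemma map_zero : π.toFun 0 = 0 := π.toAddMonoidHom.map_zero

lemma map_sub (x y : N) : π.toFun (x - y) = π.toFun x - π.toFun y :=
  π.toAddMonoidHom.map_sub x y

lemma image_mul (s t : Set N) : π.toFun '' (s * t) = π.toFun '' s * π.toFun '' t :=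
  Set.image_mul π.toMulHom

lemma preimage_image_eq_of_ker_le {P : NearRingIdeal N} (h : π.toAddMonoidHom.ker ≤ P.carrier) :
    π.toFun ⁻¹' (π.toFun '' P) = P :=
  congrArg SetLike.coe (AddSubgroup.comap_map_eq_self h)

end NearRingHom

namespace NearRingIdeal

variable {M : Type*} [NearRing M] (π : NearRingHom N M)

def map (hs : Function.Surjective π.toFun) (P : NearRingIdeal N) : NearRingIdeal M where
  carrier := P.carrier.map π.toAddMonoidHom
  normal := P.normal.map π.toAddMonoidHom hs
  mul_mem_right := by
    rintro _ n ⟨p, hp, rfl⟩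
    obtain ⟨m, rfl⟩ := hs n
    exact ⟨p * m, P.mul_mem_right p m hp, π.map_mul p m⟩
  quasi_left := by
    rintro m n _ ⟨j, hj, rfl⟩
    obtain ⟨a, rfl⟩ := hs m
    obtain ⟨b, rfl⟩ := hs n
    refine ⟨a * (b + j) - a * b, P.quasi_left a b j hj, ?_⟩
    simp [π.map_sub, π.map_mul, π.map_add]

lemma coe_map (hs : Function.Surjective π.toFun) (P : NearRingIdeal N) :
    (P.map π hs : Set M) = π.toFun '' P :=
  AddSubgroup.coe_map _ _

def comap (J : NearRingIdeal M) : NearRingIdeal N where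
  carrier := J.carrier.comap π.toAddMonoidHom
  normal := J.normal.comap π.toAddMonoidHom
  mul_mem_right i n hi := by
    simpa [π.map_mul] using J.mul_mem_right _ (π.toFun n) hi
  quasi_left m n i hi := by
    simpa [π.map_sub, π.map_mul, π.map_add] using J.quasi_left (π.toFun m) (π.toFun n) _ hi

lemma image_comap {π : NearRingHom N M} (hs : Function.Surjective π.toFun)
    (J : NearRingIdeal M) : π.toFun '' (J.comap π) = J :=
  Set.image_preimage_eq _ hs

lemma image_idealProd_comap {π : NearRingHom N M} (hs : Function.Surjective π.toFun)
    (J K : NearRingIdeal M) :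
    π.toFun '' idealProd (J.comap π) (K.comap π) = idealProd J K := by
  rw [idealProd, π.image_mul, image_comap hs, image_comap hs, idealProd]

end NearRingIdeal

namespace NearRingGrading

variable {M : Type*} [NearRing M]

lemma isGradedIdeal_iff (gr : NearRingGrading G N) (I : NearRingIdeal N) :
    gr.IsGradedIdeal I ↔
      I.carrier ≤ AddSubgroup.closure ((I : Set N) ∩ ⋃ σ : G, (gr.component σ : Set N)) := by
  refine ⟨le_of_eq, fun h => le_antisymm h ?_⟩
  rw [AddSubgroup.closure_le]
  exact Set.inter_subset_left

variable {grN : NearRingGrading G N} {grQ : NearRingGrading G M} {π : NearRingHom N M}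

lemma IsGradedIdeal.map (hs : Function.Surjective π.toFun)
    (hhom : ∀ σ, π.toFun '' (grN.component σ : Set N) ⊆ grQ.component σ)
    {P : NearRingIdeal N} (hP : grN.IsGradedIdeal P) : grQ.IsGradedIdeal (P.map π hs) := by
  rw [isGradedIdeal_iff]
  change P.carrier.map π.toAddMonoidHom ≤ _
  rw [hP, AddMonoidHom.map_closure]
  refine AddSubgroup.closure_mono ?_
  rintro _ ⟨x, ⟨hxP, hx⟩, rfl⟩
  obtain ⟨σ, hσ⟩ := Set.mem_iUnion.mp hx
  exact ⟨⟨x, hxP, rfl⟩, Set.mem_iUnion.mpr ⟨σ, hhom σ ⟨x, hσ, rfl⟩⟩⟩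

lemma IsGradedIdeal.comap {L : NearRingIdeal M} (hL : grQ.IsGradedIdeal L)
    (hlift : ∀ σ, (grQ.component σ : Set M) ⊆ π.toFun '' (grN.component σ : Set N))
    {I : NearRingIdeal N} (hI : grN.IsGradedIdeal I) (hker : π.toAddMonoidHom.ker = I.carrier) :
    grN.IsGradedIdeal (L.comap π) := by
  rw [isGradedIdeal_iff]
  set C := AddSubgroup.closure ((L.comap π : Set N) ∩ ⋃ σ : G, (grN.component σ : Set N))
  have hLC : L.carrier ≤ C.map π.toAddMonoidHom := by
    rw [hL, AddSubgroup.closure_le]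
    rintro y ⟨hyL, hy⟩
    obtain ⟨σ, hσ⟩ := Set.mem_iUnion.mp hy
    obtain ⟨x, hx, rfl⟩ := hlift σ hσ
    exact ⟨x, AddSubgroup.subset_closure ⟨hyL, Set.mem_iUnion.mpr ⟨σ, hx⟩⟩, rfl⟩
  -- `I` is generated by homogeneous elements, all of which lie in `L.comap π`.
  have hkerC : π.toAddMonoidHom.ker ≤ C := by
    rw [hker, hI]
    refine AddSubgroup.closure_mono (Set.inter_subset_inter_left _ fun x hx => ?_)
    have hx0 : π.toFun x = 0 := (hker ▸ hx : x ∈ π.toAddMonoidHom.ker)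
    show π.toFun x ∈ L
    rw [hx0]
    exact L.carrier.zero_mem
  rw [← AddSubgroup.comap_map_eq_self hkerC]
  exact AddSubgroup.comap_mono hLC

end NearRingGrading

open NearRingIdeal in
/-- If `π : N → N/I` is the canonical epimorphism (a surjective graded
homomorphism with kernel `I`, the quotient grading being the image grading) and `P` is a
graded weakly prime ideal with `I ⊆ P`, then `π(P)` is a graded weakly prime ideal of `N/I`. -/
theorem quotient_image_weaklyPrime {N' : Type*} [NearRing N']
    (grN : NearRingGrading G N) (grQ : NearRingGrading G N')
    (π : NearRingHom N N') (hsurj : Function.Surjective π.toFun)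
    (I : NearRingIdeal N) (hI : grN.IsGradedIdeal I)
    (hker : {x : N | π.toFun x = 0} = (I : Set N))
    (hcomp : ∀ σ : G, (grQ.component σ : Set N') = π.toFun '' (grN.component σ : Set N))
    (P : NearRingIdeal N) (hIP : (I : Set N) ⊆ (P : Set N))
    (hwp : grN.IsGradedWeaklyPrime P) :
    ∃ Q : NearRingIdeal N', (Q : Set N') = π.toFun '' (P : Set N) ∧
      grQ.IsGradedWeaklyPrime Q := by
  have hker' : π.toAddMonoidHom.ker = I.carrier := SetLike.coe_injective hker
  have hkerP : π.toAddMonoidHom.ker ≤ P.carrier := hker' ▸ hIP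
  refine ⟨P.map π hsurj, coe_map π hsurj P,
    hwp.1.map hsurj fun σ => (hcomp σ).ge, fun J' K' hJ' hK' hne hsub => ?_⟩
  have hgraded {L : NearRingIdeal N'} (hL : grQ.IsGradedIdeal L) :
      grN.IsGradedIdeal (L.comap π) :=
    hL.comap (fun σ => (hcomp σ).le) hI hker'
  have hprod := image_idealProd_comap hsurj J' K'
  have hne' : idealProd (J'.comap π) (K'.comap π) ≠ {0} := fun h => hne <| by
    rw [← hprod, h, Set.image_singleton, π.map_zero]
  have hsub' : idealProd (J'.comap π) (K'.comap π) ⊆ P := by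
    refine (Set.image_subset_iff.mp ?_).trans (π.preimage_image_eq_of_ker_le hkerP).subset
    rwa [hprod, ← coe_map π hsurj]
  rw [coe_map, ← image_comap hsurj J', ← image_comap hsurj K']
  exact (hwp.2 _ _ (hgraded hJ') (hgraded hK') hne' hsub').imp
    (Set.image_mono ·) (Set.image_mono ·)
end

section
/- Let N be a G-graded near-ring and P a graded ideal of N. If P is a graded almost prime ideal of N and (P² : P) = {x ∈ N : xP ⊆ P²} is contained in P, then P is a graded prime ideal of N. -/
open Pointwise

variable {G : Type*} [Monoid G] {N : Type*} [NearRing N]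

/-! Given graded ideals with `IJ ⊆ P`, enlarge `J` to `K = J + P`; still `IK ⊆ P`.
If `IK ⊆ P²`, every element of `I` lies in `(P² : P) ⊆ P`. Otherwise almost primality applied
to `I` and `K` gives `I ⊆ P` or `J ⊆ K ⊆ P`. -/

namespace NearRingIdeal

instance inst_s15 : Max (NearRingIdeal N) where
  max J P :=
    { carrier := J.carrier ⊔ P.carrier
      normal := by
        have := J.normal
        have := P.normal
        infer_instance
      mul_mem_right := by
        have := P.normal
        intro _ n hx
        obtain ⟨j, hj, p, hp, rfl⟩ := AddSubgroup.mem_sup_of_normal_right.1 hx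
        rw [NearRing.right_distrib]
        exact AddSubgroup.add_mem_sup (J.mul_mem_right j n hj) (P.mul_mem_right p n hp)
      quasi_left := by
        have := P.normal
        intro m n _ hx
        obtain ⟨j, hj, p, hp, rfl⟩ := AddSubgroup.mem_sup_of_normal_right.1 hx
        have hsplit : m * (n + (j + p)) - m * n =
            (m * ((n + j) + p) - m * (n + j)) + (m * (n + j) - m * n) := by
          simp only [sub_eq_add_neg, add_assoc, neg_add_cancel_left]
        rw [hsplit]
        exact AddSubgroup.add_mem _ (AddSubgroup.mem_sup_right (P.quasi_left m (n + j) p hp))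
          (AddSubgroup.mem_sup_left (J.quasi_left m n j hj)) }

variable {I J P : NearRingIdeal N} {x : N}

theorem sup_carrier : (J ⊔ P).carrier = J.carrier ⊔ P.carrier := rfl

theorem mem_sup_left (hx : x ∈ J) : x ∈ J ⊔ P := AddSubgroup.mem_sup_left hx

theorem mem_sup_right (hx : x ∈ P) : x ∈ J ⊔ P := AddSubgroup.mem_sup_right hx

theorem mem_sup_s15 : x ∈ J ⊔ P ↔ ∃ j ∈ J, ∃ p ∈ P, j + p = x :=
  have := P.normal
  AddSubgroup.mem_sup_of_normal_right

theorem idealProd_sup_subset (h : idealProd I J ⊆ P) : idealProd I (J ⊔ P) ⊆ P := by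
  rintro _ ⟨i, hi, _, hx, rfl⟩
  obtain ⟨j, hj, p, hp, rfl⟩ := mem_sup_s15.1 hx
  show i * (j + p) ∈ P
  rw [← sub_add_cancel (i * (j + p)) (i * j)]
  exact P.carrier.add_mem (P.quasi_left i j p hp) (h ⟨i, hi, j, hj, rfl⟩)

end NearRingIdeal

theorem NearRingGrading.IsGradedIdeal.sup_s15 {gr : NearRingGrading G N} {J P : NearRingIdeal N}
    (hJ : gr.IsGradedIdeal J) (hP : gr.IsGradedIdeal P) : gr.IsGradedIdeal (J ⊔ P) := by
  set H : Set N := ⋃ σ : G, (gr.component σ : Set N)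
  refine le_antisymm ?_ ((AddSubgroup.closure_le _).2 Set.inter_subset_left)
  rw [NearRingIdeal.sup_carrier, hJ, hP, ← AddSubgroup.closure_union]
  refine AddSubgroup.closure_mono (Set.union_subset ?_ ?_) <;>
    refine Set.inter_subset_inter_left H fun x hx => ?_
  exacts [NearRingIdeal.mem_sup_left hx, NearRingIdeal.mem_sup_right hx]

/-- If `P` is graded almost prime and `(P² : P) ⊆ P`, then `P` is graded prime. -/
theorem almostPrime_colon_subset_imp_prime (gr : NearRingGrading G N) (P : NearRingIdeal N)
    (hap : gr.IsGradedAlmostPrime P)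
    (hcolon : {x : N | ∀ p ∈ P, x * p ∈ idealProd P P} ⊆ (P : Set N)) :
    gr.IsGradedPrime P := by
  obtain ⟨hPg, hap⟩ := hap
  refine ⟨hPg, fun I J hI hJ hIJ => ?_⟩
  by_cases hsq : idealProd I (J ⊔ P) ⊆ idealProd P P
  · exact Or.inl fun i hi =>
      hcolon fun p hp => hsq ⟨i, hi, p, NearRingIdeal.mem_sup_right hp, rfl⟩
  · exact (hap I (J ⊔ P) hI (hJ.sup_s15 hPg) (NearRingIdeal.idealProd_sup_subset hIJ) hsq).imp_right
      fun hK j hj => hK (NearRingIdeal.mem_sup_left hj)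
end
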